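/- Fix $0<\varepsilon<1$ and an integer $n\ge 1$, and let $\delta(n)$ satisfy the stated range. Define $u_{jn}(\varepsilon)=\max\{0,\,j/n-\sqrt{\tfrac{1}{2n}\log(58/\varepsilon)}\}$ for $1\le j<n^{1-\delta(n)}$ and $u_{jn}(\varepsilon)=1-e^{-\tilde\nu_{jn}}e^{\sqrt{2/\varepsilon}}$ for $n^{1-\delta(n)}\le j\le n$; similarly define $u^{jn}(\varepsilon)=(j-1)/n+\sqrt{\tfrac{1}{2n}\log(58/\varepsilon)}$ for $1\le j<n^{1-\delta(n)}$ and $u^{jn}(\varepsilon)=1-e^{-\tilde\nu_{jn}}e^{-\sqrt{2/\varepsilon}}$ for $n^{1-\delta(n)}\le j\le n$, where $\tilde\nu_{jn}=\sum_{i=1}^j 1/(n-i+1)$. Then for every $1\le j\le n$, $u_{jn}(\varepsilon)<\frac{j}{n+1}<u^{jn}(\varepsilon)$. -/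

import Mathlib

open Filter Real Set

/-- `ν̃_{jn} = ∑_{i=1}^j 1/(n-i+1)`, the expected `j`-th exponential order statistic. -/
noncomputable def nutilde (n j : ℕ) : ℝ :=
  ∑ i ∈ Finset.Icc 1 j, 1 / ((n : ℝ) - (i : ℝ) + 1)

/-- The lower simultaneous bound `u_{jn}(ε)`. -/
noncomputable def ulow (ε δ : ℝ) (n j : ℕ) : ℝ :=
  if (j : ℝ) < (n : ℝ) ^ ((1:ℝ) - δ) then
    max 0 ((j : ℝ) / n - Real.sqrt (Real.log (58 / ε) / (2 * n)))
  else 1 - Real.exp (-(nutilde n j)) * Real.exp (Real.sqrt (2 / ε))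

/-- The upper simultaneous bound `u^{jn}(ε)`. -/
noncomputable def uup (ε δ : ℝ) (n j : ℕ) : ℝ :=
  if (j : ℝ) < (n : ℝ) ^ ((1:ℝ) - δ) then
    ((j : ℝ) - 1) / n + Real.sqrt (Real.log (58 / ε) / (2 * n))
  else 1 - Real.exp (-(nutilde n j)) * Real.exp (-Real.sqrt (2 / ε))


/-!
For `j < n^(1-δ)`, both `j/n` and `(j-1)/n` are within `1/(n+1)` of `j/(n+1)`, and the shift
`√(log(58/ε)/(2n))` exceeds `1/(n+1)` because `log(58/ε) ≥ 1`.
For the remaining `j`, `ν̃_{jn} = H_n - H_{n-j}`, so the harmonic bounds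
`log (m+1) ≤ H_m ≤ 1 + log m` put `ν̃_{jn}` within `1 < √(2/ε)` of `-log (1 - j/(n+1))`;
exponentiating gives the two inequalities.
-/
lemma nutilde_succ (n j : ℕ) :
    nutilde n (j + 1) = nutilde n j + 1 / ((n : ℝ) - j) := by
  rw [nutilde, Finset.sum_Icc_succ_top (Nat.le_add_left 1 j), ← nutilde]
  push_cast
  ring

lemma nutilde_add_harmonic {n j : ℕ} (hj : j ≤ n) :
    nutilde n j + harmonic (n - j) = harmonic n := by
  induction j with
  | zero => simp [nutilde]
  | succ j ih =>
    have hsplit : n - j = n - (j + 1) + 1 := by omega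
    rw [← ih (by omega), hsplit, harmonic_succ, nutilde_succ, ← hsplit,
      Nat.cast_sub (by omega : j ≤ n)]
    push_cast
    ring

lemma log_natCast_le_log_add_one (m : ℕ) : Real.log m ≤ Real.log ((m : ℝ) + 1) := by
  rcases m.eq_zero_or_pos with rfl | hm
  · simp
  · exact Real.log_le_log (by positivity) (by linarith)

lemma abs_nutilde_add_log_one_sub_div_le_one {n j : ℕ} (hj : j ≤ n) :
    |nutilde n j + Real.log (1 - j / ((n : ℝ) + 1))| ≤ 1 := by
  obtain ⟨k, rfl⟩ := Nat.exists_eq_add_of_le hj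
  have hlog : Real.log (1 - j / ((↑(j + k) : ℝ) + 1))
      = Real.log ((k : ℝ) + 1) - Real.log ((↑(j + k) : ℝ) + 1) := by
    rw [← Real.log_div (by positivity) (by positivity)]
    congr 1
    field_simp
    push_cast
    ring
  have hν : nutilde (j + k) j = harmonic (j + k) - harmonic k := by
    rw [← nutilde_add_harmonic hj, Nat.add_sub_cancel_left]
    ring
  have hHn_lo := log_add_one_le_harmonic (j + k)
  have hHn_hi := harmonic_le_one_add_log (j + k)
  have hHk_lo := log_add_one_le_harmonic k
  have hHk_hi := harmonic_le_one_add_log k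
  have hmono_n := log_natCast_le_log_add_one (j + k)
  have hmono_k := log_natCast_le_log_add_one k
  push_cast at *
  rw [hlog, hν, abs_le]
  constructor <;> linarith

lemma one_sub_exp_neg_mul_exp_lt_and_lt {p ν c : ℝ} (hp : p < 1)
    (h : |ν + Real.log (1 - p)| < c) :
    1 - Real.exp (-ν) * Real.exp c < p ∧ p < 1 - Real.exp (-ν) * Real.exp (-c) := by
  have h1p : Real.exp (Real.log (1 - p)) = 1 - p := Real.exp_log (by linarith)
  obtain ⟨hlo, hhi⟩ := abs_lt.mp h
  rw [← Real.exp_add, ← Real.exp_add]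
  constructor
  · have := Real.exp_lt_exp.mpr (show Real.log (1 - p) < -ν + c by linarith)
    linarith
  · have := Real.exp_lt_exp.mpr (show -ν + -c < Real.log (1 - p) by linarith)
    linarith

lemma one_lt_sqrt_two_div {ε : ℝ} (hε0 : 0 < ε) (hε1 : ε < 1) : 1 < Real.sqrt (2 / ε) :=
  Real.lt_sqrt_of_sq_lt (by rw [one_pow, lt_div_iff₀ hε0]; linarith)

lemma one_div_add_one_lt_sqrt_div {n L : ℝ} (hn : 0 < n) (hL : 1 ≤ L) :
    1 / (n + 1) < Real.sqrt (L / (2 * n)) := by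
  refine Real.lt_sqrt_of_sq_lt ?_
  calc (1 / (n + 1)) ^ 2 = 1 / (n + 1) ^ 2 := by rw [div_pow, one_pow]
    _ < 1 / (2 * n) := one_div_lt_one_div_of_lt (by positivity) (by nlinarith)
    _ ≤ L / (2 * n) := by gcongr

lemma one_le_log_div {a ε : ℝ} (ha : 3 ≤ a) (hε0 : 0 < ε) (hε1 : ε < 1) :
    1 ≤ Real.log (a / ε) := by
  rw [Real.le_log_iff_exp_le (by positivity), le_div_iff₀ hε0]
  nlinarith [Real.exp_one_lt_three]

lemma div_sub_lt_div_add_one {n j s : ℝ} (hn : 0 < n) (hj : j ≤ n) (hs : 1 / (n + 1) < s) :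
    j / n - s < j / (n + 1) := by
  have : j / n - j / (n + 1) ≤ 1 / (n + 1) := by
    rw [div_sub_div _ _ hn.ne' (by positivity), div_le_div_iff₀ (by positivity) (by positivity)]
    nlinarith
  linarith

lemma div_add_one_lt_sub_one_div_add {n j s : ℝ} (hn : 0 < n) (hj : 1 ≤ j)
    (hs : 1 / (n + 1) < s) : j / (n + 1) < (j - 1) / n + s := by
  have : j / (n + 1) - (j - 1) / n ≤ 1 / (n + 1) := by
    rw [div_sub_div _ _ (by positivity) hn.ne', div_le_div_iff₀ (by positivity) (by positivity)]
    nlinarith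
  linarith

theorem ulow_lt_uup_general (ε : ℝ) (hε0 : 0 < ε) (hε1 : ε < 1) (n : ℕ) (δ : ℝ) :
    ∀ j : ℕ, 1 ≤ j → j ≤ n →
      ulow ε δ n j < (j : ℝ) / ((n : ℝ) + 1) ∧ (j : ℝ) / ((n : ℝ) + 1) < uup ε δ n j := by
  intro j hj1 hjn
  have hj1' : (1 : ℝ) ≤ j := by exact_mod_cast hj1
  have hjn' : (j : ℝ) ≤ n := by exact_mod_cast hjn
  have hn : (0 : ℝ) < n := by linarith
  by_cases h : (j : ℝ) < (n : ℝ) ^ ((1 : ℝ) - δ)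
  · rw [ulow, uup, if_pos h, if_pos h]
    have hs := one_div_add_one_lt_sqrt_div hn (one_le_log_div (a := 58) (by norm_num) hε0 hε1)
    exact ⟨max_lt (by positivity) (div_sub_lt_div_add_one hn hjn' hs),
      div_add_one_lt_sub_one_div_add hn hj1' hs⟩
  · rw [ulow, uup, if_neg h, if_neg h]
    refine one_sub_exp_neg_mul_exp_lt_and_lt ?_
      ((abs_nutilde_add_log_one_sub_div_le_one hjn).trans_lt (one_lt_sqrt_two_div hε0 hε1))
    rw [div_lt_one (by positivity)]
    linarith

/-- The simultaneous bounds satisfy `u_{jn}(ε) < j/(n+1) < u^{jn}(ε)` for all `1 ≤ j ≤ n`. -/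
theorem ulow_lt_uup (ε : ℝ) (hε0 : 0 < ε) (hε1 : ε < 1) (n : ℕ) (hn : 1 ≤ n) (δ : ℝ)
    (hδ1 : 1 - Real.log ((n : ℝ) - Real.sqrt ((n : ℝ) / 2 * Real.log (58 / ε)) + 1) /
      Real.log n ≤ δ)
    (hδ2 : δ < 1 - Real.log ((n : ℝ) / 2 * Real.log (58 / ε)) / (2 * Real.log n)) :
    ∀ j : ℕ, 1 ≤ j → j ≤ n →
      ulow ε δ n j < (j : ℝ) / ((n : ℝ) + 1) ∧ (j : ℝ) / ((n : ℝ) + 1) < uup ε δ n j :=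
  ulow_lt_uup_general ε hε0 hε1 n δ
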